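/- arXiv:1809.00142 — 2 statements merged into one kernel-verified Lean document; each statement's English description precedes it below -/
import Mathlib

section
/- For every n ≥ 3, let C⃗_n^s be the digraph obtained from the directed cycle C⃗_n by adding one new vertex s together with an arc from s to every vertex of C⃗_n. Then χ⃗*(C⃗_n^s) = n/(n−1) < 2 = χ⃗_c(C⃗_n^s). -/
open Finset

variable {V : Type*}

/-- `v :: l` forms a directed cycle of the digraph with arc relation `E`:
the vertices are pairwise distinct and each one has an arc to the next, cyclically. -/
def IsDicycle (E : V → V → Prop) (v : V) (l : List V) : Prop :=
  (v :: l).Nodup ∧ List.Chain E v (l ++ [v])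

/-- The vertex set `A` induces an acyclic subdigraph of the digraph `E`:
no directed cycle of `E` has all of its vertices in `A`. -/
def AcyclicOn (E : V → V → Prop) (A : Set V) : Prop :=
  ∀ v l, IsDicycle E v l → ¬ (∀ x ∈ v :: l, x ∈ A)

/-- The open arc of length 1 in `ℝ/pℤ` starting at (the image of) `a`. -/
def unitArc (p a : ℝ) : Set (AddCircle p) :=
  (fun x : ℝ => (x : AddCircle p)) '' Set.Ioo a (a + 1)

/-- An acyclic `p`-colouring of the digraph `E` : the preimage of every open arc
of length 1 induces an acyclic subdigraph. -/
def IsAcyclicColouring (E : V → V → Prop) (p : ℝ) (c : V → AddCircle p) : Prop :=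
  ∀ a : ℝ, AcyclicOn E (c ⁻¹' unitArc p a)

/-- The star dichromatic number of a digraph. -/
noncomputable def starDichromatic (E : V → V → Prop) : ℝ :=
  sInf {p : ℝ | 1 ≤ p ∧ ∃ c : V → AddCircle p, IsAcyclicColouring E p c}

/-- A weak circular `p`-colouring in the sense of Bokal et al. -/
def IsWeakCircularColouring (E : V → V → Prop) (p : ℝ) (c : V → AddCircle p) : Prop :=
  (∀ u w, E u w → c u = c w ∨
    ∃ r : ℝ, r ∈ Set.Ico (0 : ℝ) p ∧ (r : AddCircle p) = c w - c u ∧ 1 ≤ r) ∧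
  ∀ t : AddCircle p, AcyclicOn E (c ⁻¹' {t})

/-- The circular dichromatic number of a digraph. -/
noncomputable def circularDichromatic (E : V → V → Prop) : ℝ :=
  sInf {p : ℝ | 1 ≤ p ∧ ∃ c : V → AddCircle p, IsWeakCircularColouring E p c}

/-- The fractional dichromatic number: the optimal value of the covering linear
program over the acyclic vertex subsets. -/
noncomputable def fracDichromatic [Fintype V] [DecidableEq V] (E : V → V → Prop) : ℝ :=
  sInf {r : ℝ | ∃ x : Finset V → ℝ, (∀ A, 0 ≤ x A) ∧
    (∀ A : Finset V, x A ≠ 0 → AcyclicOn E ↑A) ∧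
    (∀ v : V, 1 ≤ ∑ A ∈ Finset.univ.filter (fun A : Finset V => v ∈ A), x A) ∧
    r = ∑ A : Finset V, x A}

/-- The cyclic interval `{i, i+1, ..., i+d-1}` in `ℤ/kℤ`. -/
def cycInterval (k : ℕ) (i : ZMod k) (d : ℕ) : Set (ZMod k) :=
  {j : ZMod k | ∃ t : ℕ, t < d ∧ j = i + (t : ZMod k)}

/-- An acyclic `(k,d)`-colouring of the digraph `E`. -/
def IsAcyclicKDColouring (E : V → V → Prop) (k d : ℕ) (c : V → ZMod k) : Prop :=
  ∀ i : ZMod k, AcyclicOn E (c ⁻¹' cycInterval k i d)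

/-- The dichromatic number: the least `k` such that the vertex set can be partitioned
into `k` classes each inducing an acyclic subdigraph. -/
noncomputable def dichromatic (E : V → V → Prop) : ℕ :=
  sInf {k : ℕ | ∃ c : V → Fin k, ∀ i : Fin k, AcyclicOn E (c ⁻¹' {i})}

/-- `v :: l` forms a cycle of the simple graph `G` (of length at least 3). -/
def IsGraphCycle (G : SimpleGraph V) (v : V) (l : List V) : Prop :=
  3 ≤ (v :: l).length ∧ (v :: l).Nodup ∧ List.Chain G.Adj v (l ++ [v])

/-- The vertex set `A` induces a forest (acyclic subgraph) in the simple graph `G`. -/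
def ForestOn (G : SimpleGraph V) (A : Set V) : Prop :=
  ∀ v l, IsGraphCycle G v l → ¬ (∀ x ∈ v :: l, x ∈ A)

/-- A `(k,d)`-tree-colouring of a graph. -/
def IsTreeColouring (G : SimpleGraph V) (k d : ℕ) (c : V → ZMod k) : Prop :=
  ∀ i : ZMod k, ForestOn G (c ⁻¹' cycInterval k i d)

/-- The circular vertex arboricity of a graph. -/
noncomputable def circularVertexArboricity (G : SimpleGraph V) : ℝ :=
  sInf {r : ℝ | ∃ k d : ℕ, 1 ≤ d ∧ d ≤ k ∧
    (∃ c : V → ZMod k, IsTreeColouring G k d c) ∧ r = (k : ℝ) / d}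

/-- `E` is an orientation of the simple graph `G`: for each edge exactly one of the
two possible arcs is present, and there are no other arcs. -/
def IsOrientation (G : SimpleGraph V) (E : V → V → Prop) : Prop :=
  ∀ u w, ((E u w ∨ E w u) ↔ G.Adj u w) ∧ ¬ (E u w ∧ E w u)

/-- The star dichromatic number of a graph: the maximum over all orientations. -/
noncomputable def starDichromaticGraph (G : SimpleGraph V) : ℝ :=
  sSup {r : ℝ | ∃ E : V → V → Prop, IsOrientation G E ∧ r = starDichromatic E}

/-- The fractional dichromatic number of a graph: the maximum over all orientations. -/
noncomputable def fracDichromaticGraph [Fintype V] [DecidableEq V] (G : SimpleGraph V) : ℝ :=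
  sSup {r : ℝ | ∃ E : V → V → Prop, IsOrientation G E ∧ r = fracDichromatic E}

/-- The fractional chromatic number of a graph: the optimal value of the covering
linear program over the independent vertex subsets. -/
noncomputable def fractionalChromatic [Fintype V] [DecidableEq V] (G : SimpleGraph V) : ℝ :=
  sInf {r : ℝ | ∃ x : Finset V → ℝ, (∀ A, 0 ≤ x A) ∧
    (∀ A : Finset V, x A ≠ 0 → ∀ u ∈ A, ∀ w ∈ A, ¬ G.Adj u w) ∧
    (∀ v : V, 1 ≤ ∑ A ∈ Finset.univ.filter (fun A : Finset V => v ∈ A), x A) ∧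
    r = ∑ A : Finset V, x A}

/-- A `(k,d)`-colouring of a graph in the sense of Vince: colours of adjacent vertices
have circular `k`-distance at least `d`. -/
def IsVinceColouring (G : SimpleGraph V) (k d : ℕ) (c : V → ZMod k) : Prop :=
  ∀ u w, G.Adj u w → d ≤ (c u - c w).val ∧ d ≤ (c w - c u).val

/-- Vince's star (circular) chromatic number of a graph. -/
noncomputable def starChromatic (G : SimpleGraph V) : ℝ :=
  sInf {r : ℝ | ∃ k d : ℕ, 1 ≤ d ∧ d ≤ k ∧
    (∃ c : V → ZMod k, IsVinceColouring G k d c) ∧ r = (k : ℝ) / d}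

/-- The circulant digraph `C⃗(k,d)` on `ℤ/kℤ`: each vertex `i` has the outgoing arcs
`(i, i+d), (i, i+d+1), …, (i, i+k-1)`. -/
def circulantDigraph (k d : ℕ) : ZMod k → ZMod k → Prop :=
  fun i j => ∃ t : ℕ, d ≤ t ∧ t < k ∧ j = i + (t : ZMod k)

/-- The directed cycle `C⃗_n` on `ℤ/nℤ`. -/
def dirCycle (n : ℕ) : ZMod n → ZMod n → Prop :=
  fun i j => j = i + 1

/-- The digraph `D^s` obtained from `D` by adding a dominating source `none`. -/
def addSource (E : V → V → Prop) : Option V → Option V → Prop :=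
  fun a b => match a, b with
  | none, some _ => True
  | some u, some w => E u w
  | _, none => False

/-- The wheel graph `W_k`: a cycle on `ℤ/kℤ` together with a hub `none` adjacent to
every cycle vertex. -/
def wheelGraph (k : ℕ) : SimpleGraph (Option (ZMod k)) :=
  SimpleGraph.fromRel (fun a b => match a, b with
    | none, some _ => True
    | some i, some j => j = i + 1
    | _, none => False)

/-!
A vertex set of `C⃗_n^s` is acyclic exactly when it misses a cycle vertex: the source lies on
no directed cycle, and the only directed cycle through cycle vertices is `C⃗_n` itself.

Star dichromatic number: if `p < n/(n-1)`, the `n` cycle colours on `ℝ/pℤ` leave a gap longer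
than `p - 1` (otherwise, jumping from each colour to one at most that far ahead returns to a
colour already visited after at most `n` jumps, having travelled a positive multiple of `p` in
total length less than `p`), so they fit in one open unit arc. Conversely the colouring
`i ↦ i/(n-1)` in `ℝ/(n/(n-1))ℤ` leaves the colour of vertex `⌊a(n-1)⌋` outside the arc
`(a, a+1)`.

Circular dichromatic number: measured from the colour of the source, every cycle colour is `0`
or lies in `[1, p)`. For `p < 2` an arc leaving a colour in `[1, p)` can only go to a colour in
`[1, p)` that is not larger, so the colours are constant around the cycle, which is then
monochromatic. Colouring the vertex `-1` apart from all the others gives `p = 2`.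
-/

theorem IsDicycle.exists_rel_mem {E : V → V → Prop} {v : V} {l : List V}
    (hc : IsDicycle E v l) {x : V} (hx : x ∈ v :: l) : ∃ y ∈ v :: l, E x y := by
  have hchain : List.IsChain E ((v :: l) ++ [v]) := hc.2
  obtain ⟨k, hk, rfl⟩ := List.mem_iff_getElem.1 hx
  have hk' : k + 1 < ((v :: l) ++ [v]).length := by simp at hk ⊢; omega
  refine ⟨((v :: l) ++ [v])[k + 1], ?_, ?_⟩
  · have := List.getElem_mem hk'
    simp only [List.mem_append, List.mem_singleton] at this
    rcases this with h | h
    · exact h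
    · rw [h]
      exact List.mem_cons_self
  · have := List.isChain_iff_getElem.1 hchain k hk'
    rwa [List.getElem_append_left hk] at this

theorem IsDicycle.map_some {E : V → V → Prop} {v : V} {l : List V}
    (hc : IsDicycle E v l) : IsDicycle (addSource E) (some v) (l.map some) := by
  refine ⟨hc.1.map (Option.some_injective V), ?_⟩
  have h := (List.isChain_map (R := addSource E) some).2 (hc.2 : List.IsChain E (v :: (l ++ [v])))
  exact (by simpa using h : List.IsChain _ (some v :: (l.map some ++ [some v])))

theorem isDicycle_dirCycle (n : ℕ) [NeZero n] :
    IsDicycle (dirCycle n) 0 ((List.range (n - 1)).map fun t => ((t + 1 : ℕ) : ZMod n)) := by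
  obtain ⟨m, rfl⟩ : ∃ m, n = m + 1 := ⟨n - 1, by have := NeZero.pos n; omega⟩
  set l := (List.range m).map fun t => ((t + 1 : ℕ) : ZMod (m + 1))
  have hcons : 0 :: l = (List.range (m + 1)).map Nat.cast := by
    simp [l, List.range_succ_eq_map, Function.comp_def]
  simp only [Nat.add_sub_cancel]
  constructor
  · rw [hcons]
    refine List.Nodup.map_on (fun a ha b hb hab => ?_) List.nodup_range
    simpa [ZMod.val_cast_of_lt (List.mem_range.1 ha), ZMod.val_cast_of_lt (List.mem_range.1 hb)]
      using congrArg ZMod.val hab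
  · have hclosed : 0 :: (l ++ [0]) = (List.range (m + 2)).map Nat.cast := by
      rw [← List.cons_append, hcons]
      simp [List.range_succ]
    show List.IsChain _ (0 :: (l ++ [0]))
    rw [hclosed, List.isChain_map, List.isChain_range_succ]
    intro k _
    simp [dirCycle]

theorem ZMod.forall_of_imp_add_one {n : ℕ} [NeZero n] {P : ZMod n → Prop}
    (h : ∀ i, P i → P (i + 1)) {i : ZMod n} (hi : P i) (j : ZMod n) : P j := by
  have key : ∀ t : ℕ, P (i + t) := by
    intro t
    induction t with
    | zero => simpa using hi
    | succ t ih => simpa [add_assoc] using h _ ih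
  simpa using key (j - i).val

theorem ZMod.eq_of_forall_add_one_le {n : ℕ} [NeZero n] {α : Type*} [PartialOrder α]
    {f : ZMod n → α} (h : ∀ i, f (i + 1) ≤ f i) (i j : ZMod n) : f i = f j :=
  have le : ∀ i j, f i ≤ f j := fun i j =>
    ZMod.forall_of_imp_add_one (P := (f · ≤ f j)) (fun k hk => (h k).trans hk) le_rfl i
  (le i j).antisymm (le j i)

theorem acyclicOn_addSource_dirCycle_iff {n : ℕ} [NeZero n] {A : Set (Option (ZMod n))} :
    AcyclicOn (addSource (dirCycle n)) A ↔ ∃ i, some i ∉ A := by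
  constructor
  · intro h
    by_contra! hA
    refine h _ _ (isDicycle_dirCycle n).map_some fun x hx => ?_
    simp only [List.mem_cons, List.mem_map] at hx
    rcases hx with rfl | ⟨i, -, rfl⟩ <;> exact hA _
  · rintro ⟨i, hi⟩ v l hc hA
    have hclosed : ∀ j, some j ∈ v :: l → some (j + 1) ∈ v :: l := by
      intro j hj
      obtain ⟨y, hy, hE⟩ := hc.exists_rel_mem hj
      cases y with
      | none => exact hE.elim
      | some y => exact (show y = j + 1 from hE) ▸ hy
    obtain ⟨j, hj⟩ : ∃ j, some j ∈ v :: l := by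
      obtain ⟨y, hy, hE⟩ := hc.exists_rel_mem List.mem_cons_self
      cases y with
      | none => cases v <;> exact hE.elim
      | some j => exact ⟨j, hy⟩
    exact hi (hA _ (ZMod.forall_of_imp_add_one hclosed hj i))

namespace AddCircle

variable {p : ℝ} [Fact (0 < p)]

theorem coe_notMem_unitArc {a y : ℝ} (hya : y ≤ a) (hay : a + 1 ≤ y + p) :
    (y : AddCircle p) ∉ unitArc p a := by
  rintro ⟨x, ⟨hax, hxa⟩, hxy : (x : AddCircle p) = y⟩
  have h : ((x - y : ℝ) : AddCircle p) = 0 := by rw [coe_sub, hxy, sub_self]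
  rw [coe_eq_zero_iff_of_mem_Ico ⟨by linarith, by linarith⟩] at h
  linarith

theorem coe_injOn_Ico : Set.InjOn ((↑) : ℝ → AddCircle p) (Set.Ico 0 p) := fun x hx y hy h =>
  (coe_eq_coe_iff_of_mem_Ico (a := 0) (by rwa [zero_add]) (by rwa [zero_add])).1 h

theorem eq_or_eq_add_period_of_coe_eq {r x : ℝ} (hr : r ∈ Set.Ico 0 p)
    (hx : x ∈ Set.Ioo (-p) p) (h : (r : AddCircle p) = x) : r = x ∨ r = x + p := by
  rcases le_or_gt 0 x with hx0 | hx0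
  · exact .inl (coe_injOn_Ico hr ⟨hx0, hx.2⟩ h)
  · exact .inr (coe_injOn_Ico hr ⟨by linarith [hx.1], by linarith⟩ (by rw [h, coe_add_period]))

theorem mem_Ioc_of_weakCircularArc (hp2 : p < 2) {x y : ℝ} (hx : x ∈ Set.Ico 0 p)
    (hy : y ∈ Set.Ico 0 p) (hx1 : 1 ≤ x)
    (h : (x : AddCircle p) = y ∨ ∃ r ∈ Set.Ico 0 p, (r : AddCircle p) = y - x ∧ 1 ≤ r) :
    y ∈ Set.Ioc 0 x := by
  rcases h with h | ⟨r, hr, hrc, hr1⟩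
  · rw [← coe_injOn_Ico hx hy h]
    exact ⟨by linarith, le_rfl⟩
  · rw [← coe_sub] at hrc
    rcases eq_or_eq_add_period_of_coe_eq hr
      ⟨by linarith [hx.2, hy.1], by linarith [hx.1, hy.2]⟩ hrc with h | h
    · linarith [hy.2]
    · constructor <;> linarith [hr.2]

theorem exists_forall_ne_add {ι : Type*} [Fintype ι] [Nonempty ι] (x : ι → AddCircle p)
    {g : ℝ} (hg : Fintype.card ι * g < p) :
    ∃ i, ∀ j, ∀ s ∈ Set.Ioc 0 g, x j ≠ x i + s := by
  by_contra! h
  choose next d hd hnext using h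
  obtain ⟨i₀⟩ := ‹Nonempty ι›
  set orbit : ℕ → ι := fun m => next^[m] i₀
  set dist : ℕ → ℝ := fun m => ∑ t ∈ Finset.range m, d (orbit t)
  have horbit : ∀ m, x (orbit m) = x i₀ + (dist m : AddCircle p) := by
    intro m
    induction m with
    | zero => simp [orbit, dist]
    | succ m ih =>
      simp only [orbit, dist, Function.iterate_succ_apply', Finset.sum_range_succ,
        coe_add] at ih ⊢
      rw [hnext, ih, add_assoc]
  obtain ⟨a, b, hab, heq⟩ :=
    Fintype.exists_ne_map_eq_of_card_lt (fun m : Fin (Fintype.card ι + 1) => orbit m) (by simp)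
  wlog hlt : a < b generalizing a b
  · exact this b a hab.symm heq.symm (lt_of_le_of_ne (not_lt.1 hlt) hab.symm)
  have hsum : dist b - dist a = ∑ t ∈ Finset.Ico (a : ℕ) b, d (orbit t) :=
    (Finset.sum_Ico_eq_sub _ hlt.le).symm
  have hpos : 0 < dist b - dist a := by
    rw [hsum]
    exact Finset.sum_pos (fun t _ => (hd _).1) ⟨a, Finset.mem_Ico.2 ⟨le_rfl, hlt⟩⟩
  have hlt_p : dist b - dist a < p := by
    have hg0 : 0 ≤ g := (hd i₀).1.le.trans (hd i₀).2
    calc dist b - dist a ≤ ((b : ℕ) - a : ℕ) * g := by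
          rw [hsum, ← Nat.card_Ico, ← nsmul_eq_mul]
          exact Finset.sum_le_card_nsmul _ _ _ fun t _ => (hd (orbit t)).2
      _ ≤ Fintype.card ι * g := by
          gcongr
          have := b.2
          omega
      _ < p := hg
  have hzero : ((dist b - dist a : ℝ) : AddCircle p) = 0 := by
    have := congrArg x heq.symm
    rw [horbit, horbit] at this
    rw [coe_sub, add_left_cancel this, sub_self]
  rw [coe_eq_zero_iff_of_mem_Ico ⟨hpos.le, hlt_p⟩] at hzero
  exact hpos.ne' hzero

theorem exists_forall_mem_unitArc {ι : Type*} [Fintype ι] [Nonempty ι] (x : ι → AddCircle p)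
    (h : Fintype.card ι * (p - 1) < p) : ∃ a, ∀ i, x i ∈ unitArc p a := by
  have hcard1 : (1 : ℝ) ≤ Fintype.card ι := by exact_mod_cast Fintype.card_pos
  have hcard : (0 : ℝ) < Fintype.card ι := by linarith
  obtain ⟨g, hg1, hg2⟩ := exists_between ((lt_div_iff₀' hcard).2 h)
  rw [lt_div_iff₀' hcard] at hg2
  have hgp : g < p := by nlinarith [(Fact.out : 0 < p)]
  obtain ⟨i, hi⟩ := exists_forall_ne_add x hg2
  obtain ⟨r, hr⟩ := QuotientAddGroup.mk_surjective (x i)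
  refine ⟨r + g, fun j => ?_⟩
  obtain ⟨s, hs, hsj⟩ := eq_coe_Ico (x j - x i)
  rcases hs.1.eq_or_lt with rfl | hs0
  · refine ⟨r + p, ⟨by linarith, by linarith⟩, ?_⟩
    change ((r + p : ℝ) : AddCircle p) = x j
    rw [coe_add_period]
    exact hr.trans (sub_eq_zero.1 (by rw [← hsj, coe_zero])).symm
  · have hgs : g < s := by
      by_contra! hsg
      exact hi j s ⟨hs0, hsg⟩ (by rw [hsj]; abel)
    refine ⟨r + s, ⟨by linarith, by linarith [hs.2]⟩, ?_⟩
    change ((r + s : ℝ) : AddCircle p) = x j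
    rw [coe_add, hsj, hr]
    abel

end AddCircle

section StarDichromatic

variable {n : ℕ}

noncomputable def dirCycleStarColouring (n : ℕ) :
    Option (ZMod n) → AddCircle ((n : ℝ) / (n - 1))
  | none => 0
  | some i => ((i.val / (n - 1) : ℝ) : AddCircle _)

theorem dirCycleStarColouring_some_intCast [NeZero n] (k : ℤ) :
    dirCycleStarColouring n (some (k : ZMod n)) = ((k / (n - 1) : ℝ) : AddCircle _) := by
  have hsplit : ((k : ZMod n).val : ℝ) / (n - 1) =
      k / (n - 1) + (-(k / n) : ℤ) • ((n : ℝ) / (n - 1)) := by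
    rw [← Int.cast_natCast, ZMod.val_intCast, Int.emod_def, zsmul_eq_mul]
    push_cast
    ring
  rw [dirCycleStarColouring, hsplit, AddCircle.coe_add, AddCircle.coe_zsmul,
    AddCircle.coe_period, smul_zero, add_zero]

theorem isAcyclicColouring_dirCycleStarColouring (hn : 2 ≤ n) :
    IsAcyclicColouring (addSource (dirCycle n)) ((n : ℝ) / (n - 1))
      (dirCycleStarColouring n) := by
  have : NeZero n := ⟨by omega⟩
  have hn1 : (0 : ℝ) < n - 1 := by
    have : (2 : ℝ) ≤ n := by exact_mod_cast hn
    linarith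
  have : Fact (0 < (n : ℝ) / (n - 1)) := ⟨by positivity⟩
  intro a
  rw [acyclicOn_addSource_dirCycle_iff]
  refine ⟨⌊a * (n - 1)⌋, ?_⟩
  rw [Set.mem_preimage, dirCycleStarColouring_some_intCast]
  apply AddCircle.coe_notMem_unitArc
  · rw [div_le_iff₀ hn1]
    exact Int.floor_le _
  · rw [← add_div, le_div_iff₀ hn1]
    linarith [Int.lt_floor_add_one (a * (n - 1))]

theorem le_mul_sub_one_of_isAcyclicColouring [NeZero n] {p : ℝ} (hp : 0 < p)
    {c : Option (ZMod n) → AddCircle p} (hc : IsAcyclicColouring (addSource (dirCycle n)) p c) :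
    p ≤ n * (p - 1) := by
  have := Fact.mk hp
  by_contra! h
  obtain ⟨a, ha⟩ := AddCircle.exists_forall_mem_unitArc (fun i : ZMod n => c (some i))
    (by rwa [ZMod.card])
  obtain ⟨i, hi⟩ := acyclicOn_addSource_dirCycle_iff.1 (hc a)
  exact hi (ha i)

theorem starDichromatic_addSource_dirCycle (hn : 2 ≤ n) :
    starDichromatic (addSource (dirCycle n)) = (n : ℝ) / (n - 1) := by
  have : NeZero n := ⟨by omega⟩
  have hn1 : (0 : ℝ) < n - 1 := by
    have : (2 : ℝ) ≤ n := by exact_mod_cast hn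
    linarith
  refine IsLeast.csInf_eq ⟨⟨?_, _, isAcyclicColouring_dirCycleStarColouring hn⟩, ?_⟩
  · rw [le_div_iff₀ hn1]
    linarith
  · rintro p ⟨hp, c, hc⟩
    have := le_mul_sub_one_of_isAcyclicColouring (by linarith) hc
    rw [div_le_iff₀ hn1]
    linarith

end StarDichromatic

section CircularDichromatic

variable {n : ℕ}

noncomputable def dirCycleCircColouring (n : ℕ) (x : Option (ZMod n)) : AddCircle (2 : ℝ) :=
  if x = some (-1) then ((1 : ℝ) : AddCircle (2 : ℝ)) else 0

theorem isWeakCircularColouring_dirCycleCircColouring (hn : 2 ≤ n) :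
    IsWeakCircularColouring (addSource (dirCycle n)) 2 (dirCycleCircColouring n) := by
  have : Fact (1 < n) := ⟨hn⟩
  have : Fact ((0 : ℝ) < 2) := ⟨two_pos⟩
  have hone : ((1 : ℝ) : AddCircle (2 : ℝ)) ≠ 0 := by
    rw [Ne, AddCircle.coe_eq_zero_iff_of_mem_Ico ⟨zero_le_one, one_lt_two⟩]
    exact one_ne_zero
  have hneg : -((1 : ℝ) : AddCircle (2 : ℝ)) = ((1 : ℝ) : AddCircle (2 : ℝ)) := by
    rw [neg_eq_iff_add_eq_zero, ← AddCircle.coe_add, one_add_one_eq_two, AddCircle.coe_period]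
  have hcol : ∀ x, dirCycleCircColouring n x = 0 ∨
      dirCycleCircColouring n x = ((1 : ℝ) : AddCircle (2 : ℝ)) := by
    intro x
    unfold dirCycleCircColouring
    split_ifs <;> simp
  refine ⟨fun u w _ => ?_, fun t => ?_⟩
  · rcases hcol u with hu | hu <;> rcases hcol w with hw | hw <;> rw [hu, hw]
    · exact .inl rfl
    · exact .inr ⟨1, ⟨zero_le_one, one_lt_two⟩, by rw [sub_zero], le_rfl⟩
    · exact .inr ⟨1, ⟨zero_le_one, one_lt_two⟩, by rw [zero_sub, hneg], le_rfl⟩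
    · exact .inl rfl
  · rw [acyclicOn_addSource_dirCycle_iff]
    have h0 : dirCycleCircColouring n (some 0) = 0 := by
      simp [dirCycleCircColouring, (neg_ne_zero.2 (one_ne_zero (α := ZMod n))).symm]
    have h1 : dirCycleCircColouring n (some (-1)) = ((1 : ℝ) : AddCircle (2 : ℝ)) := by
      simp [dirCycleCircColouring]
    by_cases ht : t = 0
    · exact ⟨-1, by simp [h1, ht, hone]⟩
    · exact ⟨0, by simp [h0, Ne.symm ht]⟩

theorem two_le_of_isWeakCircularColouring [NeZero n] {p : ℝ} (hp : 0 < p)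
    {c : Option (ZMod n) → AddCircle p}
    (hc : IsWeakCircularColouring (addSource (dirCycle n)) p c) : 2 ≤ p := by
  have := Fact.mk hp
  obtain ⟨harc, hfib⟩ := hc
  by_contra! hp2
  choose d hd hdc using fun i => AddCircle.eq_coe_Ico (c (some i) - c none)
  have hcol : ∀ i, c (some i) = c none + d i := fun i => (eq_sub_iff_add_eq'.1 (hdc i)).symm
  have hsource : ∀ i, d i = 0 ∨ 1 ≤ d i := by
    intro i
    have := harc none (some i) trivial
    rw [hcol, add_sub_cancel_left, left_eq_add, AddCircle.coe_eq_zero_iff_of_mem_Ico (hd i)]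
      at this
    rcases this with h | ⟨r, hr, hrc, hr1⟩
    · exact .inl h
    · exact .inr (AddCircle.coe_injOn_Ico hr (hd i) hrc ▸ hr1)
  have hcycle : ∀ i, 1 ≤ d i → 1 ≤ d (i + 1) ∧ d (i + 1) ≤ d i := by
    intro i hi
    have := harc (some i) (some (i + 1)) rfl
    rw [hcol, hcol, add_right_inj, add_sub_add_left_eq_sub] at this
    obtain ⟨hpos, hle⟩ := AddCircle.mem_Ioc_of_weakCircularArc hp2 (hd i) (hd (i + 1)) hi this
    exact ⟨(hsource _).resolve_left hpos.ne', hle⟩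
  obtain ⟨i₀, hi₀⟩ := acyclicOn_addSource_dirCycle_iff.1 (hfib (c none))
  have hi₀' : 1 ≤ d i₀ := (hsource i₀).resolve_left fun h => hi₀ (by simp [hcol, h])
  have hall := ZMod.forall_of_imp_add_one (fun i hi => (hcycle i hi).1) hi₀'
  have hconst := ZMod.eq_of_forall_add_one_le fun i => (hcycle i (hall i)).2
  obtain ⟨j, hj⟩ := acyclicOn_addSource_dirCycle_iff.1 (hfib (c (some 0)))
  exact hj (by simp [hcol, hconst j 0])

theorem circularDichromatic_addSource_dirCycle (hn : 2 ≤ n) :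
    circularDichromatic (addSource (dirCycle n)) = 2 := by
  have : NeZero n := ⟨by omega⟩
  refine IsLeast.csInf_eq
    ⟨⟨one_le_two, _, isWeakCircularColouring_dirCycleCircColouring hn⟩, ?_⟩
  rintro p ⟨hp, c, hc⟩
  exact two_le_of_isWeakCircularColouring (by linarith) hc

end CircularDichromatic

theorem stmt15_general (n : ℕ) (hn : 3 ≤ n) :
    starDichromatic (addSource (dirCycle n)) = (n : ℝ) / ((n : ℝ) - 1) ∧
    (n : ℝ) / ((n : ℝ) - 1) < 2 ∧
    circularDichromatic (addSource (dirCycle n)) = 2 := by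
  have hn' : (3 : ℝ) ≤ n := by exact_mod_cast hn
  refine ⟨starDichromatic_addSource_dirCycle (by omega), ?_,
    circularDichromatic_addSource_dirCycle (by omega)⟩
  rw [div_lt_iff₀ (by linarith)]
  linarith

/-- `χ⃗*(C⃗_n^s) = n/(n-1) < 2 = χ⃗_c(C⃗_n^s)` for `n ≥ 3`. -/
theorem stmt15 (n : ℕ) [NeZero n] (hn : 3 ≤ n) :
    starDichromatic (addSource (dirCycle n)) = (n : ℝ) / ((n : ℝ) - 1) ∧
    (n : ℝ) / ((n : ℝ) - 1) < 2 ∧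
    circularDichromatic (addSource (dirCycle n)) = 2 :=
  stmt15_general n hn
end

section
/- For every undirected simple graph G, χ⃗*(G) ≤ va*(G), where χ⃗*(G) is the maximum of the star dichromatic number over all orientations of G and va*(G) is the circular vertex arboricity of G. -/
open Finset

variable {V : Type*}

/-!
A directed cycle in an orientation of `G` is a cycle of `G`, so a vertex set inducing a forest in
`G` is acyclic in every orientation. Given a `(k,d)`-tree-colouring `c`, the colouring
`v ↦ c(v)/d` into `ℝ/(k/d)ℤ` sends the vertices coloured in an open arc of length 1 to colours in
`d` consecutive residues mod `k`, which induce a forest. Hence `χ⃗*(D) ≤ k/d` for every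
orientation `D` of `G`.
-/

lemma ForestOn.mono {G : SimpleGraph V} {A B : Set V} (hB : ForestOn G B) (hAB : A ⊆ B) :
    ForestOn G A :=
  fun v l hcyc hA => hB v l hcyc fun x hx => hAB (hA x hx)

lemma forestOn_of_subsingleton {G : SimpleGraph V} {A : Set V} (hA : A.Subsingleton) :
    ForestOn G A := by
  rintro v (_ | ⟨w, l⟩) ⟨hlen, hnd, -⟩ hall
  · simp at hlen
  · exact (List.nodup_cons.mp hnd).1 <|
      hA (hall w (by simp)) (hall v (by simp)) ▸ List.mem_cons_self

lemma IsOrientation.acyclicOn {G : SimpleGraph V} {E : V → V → Prop} (hE : IsOrientation G E)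
    {A : Set V} (hA : ForestOn G A) : AcyclicOn E A := by
  rintro v l ⟨hnd, hch⟩ hall
  change List.IsChain E (v :: (l ++ [v])) at hch
  match l, hch with
  | [], hch => exact G.irrefl ((hE v v).1.mp (Or.inl (List.isChain_pair.mp hch)))
  | [w], hch =>
    simp only [List.cons_append, List.nil_append, List.isChain_cons_cons] at hch
    exact (hE v w).2 ⟨hch.1, hch.2.1⟩
  | w :: u :: l, hch =>
    exact hA v (w :: u :: l) ⟨by simp, hnd, hch.imp fun a b h => (hE a b).1.mp (Or.inl h)⟩ hall

lemma intCast_mem_cycInterval {k d : ℕ} {i n : ℤ} (hin : i ≤ n) (hnd : n < i + d) :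
    (n : ZMod k) ∈ cycInterval k i d :=
  ⟨(n - i).toNat, by omega, by rw [← Int.cast_natCast, Int.toNat_of_nonneg (by omega)]; simp⟩

lemma exists_intCast_eq_of_coe_eq_val_div {k d : ℕ} [NeZero k] (hd : d ≠ 0) (j : ZMod k)
    {x : ℝ} (hx : (x : AddCircle ((k : ℝ) / d)) = ((j.val / d : ℝ) : AddCircle ((k : ℝ) / d))) :
    ∃ n : ℤ, (d : ℝ) * x = n ∧ (n : ZMod k) = j := by
  obtain ⟨m, hm⟩ := (AddCircle.coe_eq_zero_iff _).mp
    (by rw [AddCircle.coe_sub, hx, sub_self] : ((x - j.val / d : ℝ) : AddCircle ((k : ℝ) / d)) = 0)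
  refine ⟨j.val + m * k, ?_, by simp⟩
  rw [zsmul_eq_mul] at hm
  field_simp at hm
  push_cast
  linarith

lemma IsTreeColouring.isAcyclicColouring {G : SimpleGraph V} {E : V → V → Prop}
    {k d : ℕ} [NeZero k] {c : V → ZMod k} (hc : IsTreeColouring G k d c)
    (hE : IsOrientation G E) (hd : d ≠ 0) :
    IsAcyclicColouring E ((k : ℝ) / d)
      fun v => (((c v).val / d : ℝ) : AddCircle ((k : ℝ) / d)) := by
  have hd₀ : (0 : ℝ) < d := by positivity
  intro a
  refine hE.acyclicOn <| (hc (⌊d * a⌋ + 1 : ℤ)).mono ?_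
  rintro v ⟨x, ⟨hax, hxa⟩, hxv⟩
  obtain ⟨n, hxn, hnv⟩ := exists_intCast_eq_of_coe_eq_val_div hd (c v) hxv
  have hlo : (d : ℝ) * a < n := hxn ▸ mul_lt_mul_of_pos_left hax hd₀
  have hhi : (n : ℝ) < d * a + d := by rw [← hxn]; nlinarith
  rw [Set.mem_preimage, ← hnv]
  refine intCast_mem_cycInterval (Int.floor_lt.mpr hlo) ?_
  have := Int.le_floor.mpr (by push_cast; linarith : ((n - d : ℤ) : ℝ) ≤ d * a)
  omega

lemma IsOrientation.starDichromatic_le {G : SimpleGraph V} {E : V → V → Prop}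
    (hE : IsOrientation G E) {k d : ℕ} (hd : 1 ≤ d) (hdk : d ≤ k) {c : V → ZMod k}
    (hc : IsTreeColouring G k d c) : starDichromatic E ≤ (k : ℝ) / d := by
  have : NeZero k := ⟨by omega⟩
  have hd₀ : (0 : ℝ) < d := by exact_mod_cast hd
  exact csInf_le ⟨1, fun _ hp => hp.1⟩
    ⟨(one_le_div hd₀).mpr (by exact_mod_cast hdk), _, hc.isAcyclicColouring hE (by omega)⟩

lemma cycInterval_one (k : ℕ) (i : ZMod k) : cycInterval k i 1 = {i} := by
  ext j
  simp [cycInterval]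

lemma isTreeColouring_one_of_injective (G : SimpleGraph V) {k : ℕ} {c : V → ZMod k}
    (hc : c.Injective) : IsTreeColouring G k 1 c := fun i =>
  forestOn_of_subsingleton <| cycInterval_one k i ▸ Set.subsingleton_singleton.preimage hc

lemma exists_isTreeColouring_one [Fintype V] (G : SimpleGraph V) :
    ∃ k, 1 ≤ k ∧ ∃ c : V → ZMod k, IsTreeColouring G k 1 c := by
  obtain ⟨e⟩ := Function.Embedding.nonempty_of_card_le
    (α := V) (β := ZMod (Fintype.card V + 1)) (by simp [ZMod.card])
  exact ⟨_, by omega, e, isTreeColouring_one_of_injective G e.injective⟩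

theorem stmt17_general {V : Type*} [Fintype V]
    (G : SimpleGraph V) :
    starDichromaticGraph G ≤ circularVertexArboricity G := by
  obtain ⟨k₀, hk₀, c₀, hc₀⟩ := exists_isTreeColouring_one G
  unfold starDichromaticGraph circularVertexArboricity
  refine Real.sSup_le ?_ (Real.sInf_nonneg ?_)
  · rintro _ ⟨E, hE, rfl⟩
    refine le_csInf ⟨_, k₀, 1, le_rfl, hk₀, ⟨c₀, hc₀⟩, rfl⟩ ?_
    rintro _ ⟨k, d, hd, hdk, ⟨c, hc⟩, rfl⟩
    exact hE.starDichromatic_le hd hdk hc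
  · rintro _ ⟨k, d, -, -, -, rfl⟩
    positivity

/-- `χ⃗*(G) ≤ va*(G)` for every simple graph `G`. -/
theorem stmt17 {V : Type*} [Fintype V] [DecidableEq V] [Nonempty V]
    (G : SimpleGraph V) :
    starDichromaticGraph G ≤ circularVertexArboricity G :=
  stmt17_general G
end
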